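/- Let Γ be a finite simple graph on vertex set {1, …, m}. The collection of vertex sets of complete subgraphs (cliques) of Γ, ordered by inclusion, is closed under taking subsets, and every clique is contained in a maximal clique. Moreover, the number of maximal cliques of a graph on m vertices is at most 3^{m/3} (more precisely, at most 3^{⌊m/3⌋}·c for a constant c ≤ 4/3 depending on m mod 3). -/
import Mathlib

open Finset

namespace MoonMoser

variable {V : Type*} [DecidableEq V] [Fintype V] (G : SimpleGraph V)

open scoped Classical in
/-- Closed non-neighborhood of `u`: `u` together with its non-neighbors. -/
noncomputable def B (u : V) : Finset V := univ.filter (fun x => x = u ∨ ¬ G.Adj u x)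

open scoped Classical in
/-- Maximal cliques contained in the ground set `A`. -/
noncomputable def MC (A : Finset V) : Finset (Finset V) :=
  A.powerset.filter (fun S => G.IsClique (S : Set V) ∧
    ∀ T ∈ A.powerset, G.IsClique (T : Set V) → S ⊆ T → T = S)

lemma mem_B {u x : V} : x ∈ B G u ↔ x = u ∨ ¬ G.Adj u x := by
  simp [B]

lemma mem_MC {A S : Finset V} : S ∈ MC G A ↔ S ⊆ A ∧ G.IsClique (S : Set V) ∧
    ∀ T ∈ A.powerset, G.IsClique (T : Set V) → S ⊆ T → T = S := by
  simp [MC, and_assoc]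

lemma insert_clique {S : Finset V} {v : V} (hS : G.IsClique (S : Set V))
    (hv : ∀ x ∈ S, x ≠ v → G.Adj v x) : G.IsClique ((insert v S : Finset V) : Set V) := by
  rw [coe_insert]
  exact hS.insert (fun x hx hxv => hv x hx hxv.symm)

lemma meets {A S : Finset V} (hS : S ∈ MC G A) {v : V} (hv : v ∈ A) :
    ∃ u ∈ S, u ∈ B G v := by
  rw [mem_MC] at hS
  obtain ⟨hSA, hcl, hmax⟩ := hS
  by_contra h
  push_neg at h
  have hvS : v ∉ S := fun hvs => h v hvs (by simp [mem_B])
  have hadj : ∀ x ∈ S, x ≠ v → G.Adj v x := by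
    intro x hx _
    have := h x hx
    rw [mem_B] at this
    push_neg at this
    exact this.2
  have hins : G.IsClique ((insert v S : Finset V) : Set V) := insert_clique G hcl hadj
  have := hmax (insert v S) (mem_powerset.2 (insert_subset hv hSA)) hins (subset_insert _ _)
  exact hvS (this ▸ mem_insert_self v S)

lemma erase_mem_MC {A S : Finset V} (hS : S ∈ MC G A) {u : V} (hu : u ∈ S) :
    S.erase u ∈ MC G (A \ B G u) := by
  rw [mem_MC] at hS ⊢
  obtain ⟨hSA, hcl, hmax⟩ := hS
  have hadj : ∀ x ∈ S, x ≠ u → G.Adj u x := fun x hx hxu =>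
    hcl (by simpa using hu) (by simpa using hx) (Ne.symm hxu)
  refine ⟨?_, hcl.subset (by simp), ?_⟩
  · intro x hx
    rw [mem_erase] at hx
    rw [mem_sdiff, mem_B]
    push_neg
    exact ⟨hSA hx.2, hx.1, hadj x hx.2 hx.1⟩
  · intro T hT hTcl hsub
    rw [mem_powerset] at hT
    have hTB : ∀ x ∈ T, x ≠ u ∧ G.Adj u x := by
      intro x hx
      have := hT hx
      rw [mem_sdiff, mem_B] at this
      push_neg at this
      exact this.2
    have hins : G.IsClique ((insert u T : Finset V) : Set V) :=
      insert_clique G hTcl (fun x hx _ => (hTB x hx).2)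
    have hTA : insert u T ⊆ A := insert_subset (hSA hu) (hT.trans (sdiff_subset))
    have hST : S ⊆ insert u T := by
      intro x hx
      rcases eq_or_ne x u with rfl | hxu
      · exact mem_insert_self _ _
      · exact mem_insert_of_mem (hsub (mem_erase.2 ⟨hxu, hx⟩))
    have heq := hmax (insert u T) (mem_powerset.2 hTA) hins hST
    have huT : u ∉ T := fun h => (hTB u h).1 rfl
    calc T = (insert u T).erase u := by rw [erase_insert huT]
    _ = S.erase u := by rw [heq]

lemma MC_subset_biUnion {A : Finset V} {v : V} (hv : v ∈ A) :
    MC G A ⊆ (A ∩ B G v).biUnion (fun u => (MC G (A \ B G u)).image (insert u)) := by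
  intro S hS
  obtain ⟨u, huS, huB⟩ := meets G hS hv
  have hSA : S ⊆ A := (mem_MC G).1 hS |>.1
  rw [mem_biUnion]
  refine ⟨u, mem_inter.2 ⟨hSA huS, huB⟩, ?_⟩
  rw [mem_image]
  exact ⟨S.erase u, erase_mem_MC G hS huS, insert_erase huS⟩

lemma cube_le_three_pow (k : ℕ) : k ^ 3 ≤ 3 ^ k := by
  induction k with
  | zero => norm_num
  | succ n ih =>
    rcases Nat.lt_or_ge n 3 with h | h
    · interval_cases n <;> norm_num
    · have h2 : 3 * n ≤ n ^ 2 := by nlinarith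
      have : (n + 1) ^ 3 ≤ 3 * n ^ 3 := by nlinarith [h2, sq_nonneg n]
      calc (n + 1) ^ 3 ≤ 3 * n ^ 3 := this
      _ ≤ 3 * 3 ^ n := by omega
      _ = 3 ^ (n + 1) := by ring

lemma nat_le_rpow (k : ℕ) : (k : ℝ) ≤ (3 : ℝ) ^ ((k : ℝ) / 3) := by
  have h3 : (0:ℝ) ≤ (3:ℝ) ^ ((k : ℝ) / 3) := (Real.rpow_pos_of_pos (by norm_num) _).le
  have key : (k:ℝ) ^ (3:ℕ) ≤ ((3:ℝ) ^ ((k:ℝ)/3)) ^ (3:ℕ) := by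
    have h1 : ((3:ℝ) ^ ((k:ℝ)/3)) ^ (3:ℕ) = (3:ℝ) ^ (k:ℕ) := by
      rw [← Real.rpow_natCast ((3:ℝ) ^ ((k:ℝ)/3)) 3, ← Real.rpow_mul (by norm_num)]
      rw [show (k:ℝ)/3 * ((3:ℕ):ℝ) = ((k:ℕ):ℝ) by push_cast; ring, Real.rpow_natCast]
    rw [h1]
    calc (k:ℝ)^(3:ℕ) = ((k^3 : ℕ):ℝ) := by push_cast; ring
    _ ≤ ((3^k : ℕ):ℝ) := by exact_mod_cast cube_le_three_pow k
    _ = (3:ℝ)^(k:ℕ) := by push_cast; ring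
  exact le_of_pow_le_pow_left₀ (by norm_num) h3 key

lemma MC_card_bound (n : ℕ) : ∀ (A : Finset V), A.card ≤ n →
    ((MC G A).card : ℝ) ≤ (3 : ℝ) ^ ((A.card : ℝ) / 3) := by
  induction n with
  | zero =>
    intro A hA
    have : A = ∅ := card_eq_zero.1 (Nat.le_zero.1 hA)
    subst this
    have : MC G ∅ ⊆ {∅} := by
      intro S hS
      have := ((mem_MC G).1 hS).1
      simp only [subset_empty] at this
      simp [this]
    calc ((MC G ∅).card : ℝ) ≤ ({∅} : Finset (Finset V)).card := by
          exact_mod_cast card_le_card this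
    _ = 1 := by simp
    _ ≤ _ := by simp
  | succ n ih =>
    intro A hA
    rcases A.eq_empty_or_nonempty with rfl | hne
    · exact ih ∅ (Nat.zero_le n)
    · -- pick v ∈ A minimizing (A ∩ B G v).card
      obtain ⟨v, hvA, hvmin⟩ := exists_min_image A (fun u => (A ∩ B G u).card) hne
      set k := (A ∩ B G v).card with hk
      have hk1 : 1 ≤ k := by
        rw [hk]
        refine card_pos.2 ⟨v, mem_inter.2 ⟨hvA, ?_⟩⟩
        rw [mem_B]; left; rfl
      have hkA : k ≤ A.card := card_le_card (inter_subset_left)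
      have hsub := MC_subset_biUnion G hvA
      have hstep : ((MC G A).card : ℝ) ≤ (k : ℝ) * (3:ℝ) ^ (((A.card : ℝ) - k) / 3) := by
        calc ((MC G A).card : ℝ)
            ≤ (((A ∩ B G v).biUnion (fun u => (MC G (A \ B G u)).image (insert u))).card : ℝ) := by
              exact_mod_cast card_le_card hsub
        _ ≤ ∑ u ∈ A ∩ B G v, (((MC G (A \ B G u)).image (insert u)).card : ℝ) := by
              exact_mod_cast card_biUnion_le
        _ ≤ ∑ u ∈ A ∩ B G v, ((MC G (A \ B G u)).card : ℝ) := by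
              refine sum_le_sum fun u _ => ?_
              exact_mod_cast card_image_le
        _ ≤ ∑ u ∈ A ∩ B G v, (3:ℝ) ^ (((A.card : ℝ) - k) / 3) := by
              refine sum_le_sum fun u hu => ?_
              have huA : u ∈ A := (mem_inter.1 hu).1
              have hmin := hvmin u huA
              have hcards := card_sdiff_add_card_inter A (B G u)
              have hu1 : 1 ≤ (A ∩ B G u).card :=
                card_pos.2 ⟨u, mem_inter.2 ⟨huA, by rw [mem_B]; left; rfl⟩⟩
              have hle : ((A \ B G u).card : ℝ) / 3 ≤ ((A.card : ℝ) - k) / 3 := by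
                have : (A \ B G u).card + k ≤ A.card := by omega
                have h' : ((A \ B G u).card : ℝ) ≤ (A.card : ℝ) - k := by
                  have := (Nat.cast_le (α := ℝ)).2 this
                  push_cast at this ⊢
                  linarith
                linarith
              have hn : (A \ B G u).card ≤ n := by omega
              calc ((MC G (A \ B G u)).card : ℝ)
                  ≤ (3:ℝ) ^ (((A \ B G u).card : ℝ) / 3) := ih _ hn
              _ ≤ (3:ℝ) ^ (((A.card : ℝ) - k) / 3) :=
                  Real.rpow_le_rpow_of_exponent_le (by norm_num) hle
        _ = (k : ℝ) * (3:ℝ) ^ (((A.card : ℝ) - k) / 3) := by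
              rw [sum_const, ← hk]; push_cast; ring
      calc ((MC G A).card : ℝ) ≤ (k : ℝ) * (3:ℝ) ^ (((A.card : ℝ) - k) / 3) := hstep
      _ ≤ (3:ℝ) ^ ((k:ℝ)/3) * (3:ℝ) ^ (((A.card : ℝ) - k) / 3) := by
            exact mul_le_mul_of_nonneg_right (nat_le_rpow k) (Real.rpow_pos_of_pos (by norm_num) _).le
      _ = (3:ℝ) ^ ((A.card : ℝ)/3) := by
            rw [← Real.rpow_add (by norm_num)]
            ring_nf

end MoonMoser

/-- For a finite simple graph `G` on `m` vertices: the cliques of `G` are downward closed,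
every clique is contained in a maximal clique, and (Moon–Moser) the number of maximal cliques
is at most `3 ^ (m / 3)` (real exponent). -/
theorem stmt14 (m : ℕ) (G : SimpleGraph (Fin m)) :
    (∀ s t : Finset (Fin m), s ⊆ t → G.IsClique (t : Set (Fin m)) →
      G.IsClique (s : Set (Fin m))) ∧
    (∀ s : Finset (Fin m), G.IsClique (s : Set (Fin m)) →
      ∃ t : Finset (Fin m), s ⊆ t ∧ G.IsClique (t : Set (Fin m)) ∧
        ∀ u : Finset (Fin m), G.IsClique (u : Set (Fin m)) → t ⊆ u → u = t) ∧
    ((Nat.card {s : Finset (Fin m) // G.IsClique (s : Set (Fin m)) ∧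
        ∀ u : Finset (Fin m), G.IsClique (u : Set (Fin m)) → s ⊆ u → u = s} : ℝ)
      ≤ (3 : ℝ) ^ ((m : ℝ) / 3)) := by
  classical
  refine ⟨fun s t hst ht => ht.subset (by exact_mod_cast hst), ?_, ?_⟩
  · intro s hs
    set F : Finset (Finset (Fin m)) :=
      univ.powerset.filter (fun t => s ⊆ t ∧ G.IsClique (t : Set (Fin m))) with hF
    have hsF : s ∈ F := by
      rw [hF, mem_filter, mem_powerset]
      exact ⟨subset_univ s, Subset.refl s, hs⟩
    obtain ⟨t, htF, hmax⟩ := exists_max_image F card ⟨s, hsF⟩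
    rw [hF, mem_filter, mem_powerset] at htF
    refine ⟨t, htF.2.1, htF.2.2, fun u hu htu => ?_⟩
    have huF : u ∈ F := by
      rw [hF, mem_filter, mem_powerset]
      exact ⟨subset_univ u, htF.2.1.trans htu, hu⟩
    exact (eq_of_subset_of_card_le htu (hmax u huF)).symm
  · have hinj : Function.Injective
        (fun s : {s : Finset (Fin m) // G.IsClique (s : Set (Fin m)) ∧
          ∀ u : Finset (Fin m), G.IsClique (u : Set (Fin m)) → s ⊆ u → u = s} =>
          (⟨s.1, by
            rw [MoonMoser.mem_MC]
            exact ⟨subset_univ _, s.2.1, fun T _ hT hsT => s.2.2 T hT hsT⟩⟩ :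
            {x // x ∈ MoonMoser.MC G (univ : Finset (Fin m))})) := by
      intro a b hab
      simp only [Subtype.mk.injEq] at hab
      exact Subtype.ext hab
    have h1 := Nat.card_le_card_of_injective _ hinj
    have h2 : Nat.card {x // x ∈ MoonMoser.MC G (univ : Finset (Fin m))}
        = (MoonMoser.MC G (univ : Finset (Fin m))).card := Nat.card_eq_finsetCard _
    have h3 := MoonMoser.MC_card_bound G (univ : Finset (Fin m)).card univ le_rfl
    have h4 : ((univ : Finset (Fin m)).card : ℝ) = (m : ℝ) := by
      simp [card_univ]
    calc (Nat.card {s : Finset (Fin m) // G.IsClique (s : Set (Fin m)) ∧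
        ∀ u : Finset (Fin m), G.IsClique (u : Set (Fin m)) → s ⊆ u → u = s} : ℝ)
        ≤ ((MoonMoser.MC G (univ : Finset (Fin m))).card : ℝ) := by
          rw [← h2]; exact_mod_cast h1
    _ ≤ (3 : ℝ) ^ (((univ : Finset (Fin m)).card : ℝ) / 3) := h3
    _ = (3 : ℝ) ^ ((m : ℝ) / 3) := by rw [h4]
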